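/- With notation of the balance principle (C self-dual of length n, A_{k,1} the number of weight-k codewords with 1 in a fixed coordinate position, A_k the number of weight-k codewords, ρ = √2 − 1): Σ_{k=0}^{n} A_{k,1} ρ^{k−1} = ((1+ρ)/4) · Σ_{k=0}^{n} A_k ρ^k. In particular, the left-hand side is independent of the chosen coordinate position. -/

import Mathlib

/-!
Put `B_δ = ∑_{v ∈ C, v_t = δ} ρ ^ (wt v - δ)`. Since `1 + ρ (-1) ^ a = √2 ρ ^ a` for `a ∈ {0, 1}`,
the function `v ↦ [v_t = δ] ρ ^ (wt v - v_t)` has Fourier transform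
`u ↦ √2 ^ (n - 1) (-1) ^ (u_t δ) ρ ^ (wt u - u_t)`, so Poisson summation over the self-dual
code `C` gives `|C| B_0 = √2 ^ (n - 1) (B_0 + B_1)` and `|C| B_1 = √2 ^ (n - 1) (B_0 - B_1)`.
Eliminating `|C|` leaves `B_0² - 2 B_0 B_1 - B_1² = 0`, whose only nonnegative root is
`B_1 = ρ B_0`. The left-hand side is `B_1`, and `∑ A_k ρ ^ k = B_0 + ρ B_1 = (1 + ρ²) B_0`,
so the claim reduces to `(1 + ρ) (1 + ρ²) = 4 ρ`.
-/

open Finset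

noncomputable def rho : ℝ := Real.sqrt 2 - 1

def wt {n : ℕ} (v : Fin n → ZMod 2) : ℕ := (univ.filter fun i => v i = 1).card

def IsSelfDual {n : ℕ} (C : Submodule (ZMod 2) (Fin n → ZMod 2)) : Prop :=
  ∀ u, u ∈ C ↔ ∀ c ∈ C, ∑ i, u i * c i = 0

lemma zmod_two_cases (a : ZMod 2) : a = 0 ∨ a = 1 := by decide +revert

noncomputable def sgn (a : ZMod 2) : ℝ := (-1) ^ a.val

@[simp] lemma sgn_zero : sgn 0 = 1 := by simp [sgn]

@[simp] lemma sgn_one : sgn 1 = -1 := by simp [sgn, ZMod.val_one]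

lemma sgn_add (a b : ZMod 2) : sgn (a + b) = sgn a * sgn b := by
  rw [sgn, sgn, sgn, ZMod.val_add, ← neg_one_pow_eq_pow_mod_two, pow_add]

lemma sgn_sum {ι : Type*} (s : Finset ι) (f : ι → ZMod 2) :
    sgn (∑ i ∈ s, f i) = ∏ i ∈ s, sgn (f i) := by
  classical
  induction s using Finset.induction_on with
  | empty => simp
  | insert a s ha ih => rw [sum_insert ha, prod_insert ha, sgn_add, ih]

lemma sum_prod_mul_sgn_dot {ι : Type*} [Fintype ι] [DecidableEq ι] (h : ι → ZMod 2 → ℝ)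
    (u : ι → ZMod 2) :
    ∑ v : ι → ZMod 2, (∏ i, h i (v i)) * sgn (∑ i, u i * v i) =
      ∏ i, (h i 0 + h i 1 * sgn (u i)) := by
  have hsum (i : ι) : ∑ a, h i a * sgn (u i * a) = h i 0 + h i 1 * sgn (u i) := by
    rw [show (univ : Finset (ZMod 2)) = {0, 1} from rfl, sum_pair zero_ne_one]
    simp
  simp_rw [← hsum, Fintype.prod_sum, sgn_sum, ← prod_mul_distrib]

lemma rho_pos : 0 < rho := by
  have : (1 : ℝ) < Real.sqrt 2 := by
    rw [Real.lt_sqrt zero_le_one]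
    norm_num
  rw [rho]
  linarith

lemma one_add_rho_mul_sgn (a : ZMod 2) : 1 + rho * sgn a = Real.sqrt 2 * rho ^ a.val := by
  have h2 : Real.sqrt 2 ^ 2 = 2 := Real.sq_sqrt zero_le_two
  obtain rfl | rfl := zmod_two_cases a
  · simp [rho]
  · simp only [sgn_one, ZMod.val_one, pow_one, rho]
    linear_combination -h2

lemma one_add_rho_mul_one_add_rho_sq : (1 + rho) * (1 + rho ^ 2) = 4 * rho := by
  have h2 : Real.sqrt 2 ^ 2 = 2 := Real.sq_sqrt zero_le_two
  simp only [rho]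
  linear_combination (Real.sqrt 2 - 2) * h2

lemma eq_rho_mul_of_mul_eq {c s x y : ℝ} (hs : s ≠ 0) (hx : 0 < x) (hy : 0 ≤ y)
    (h0 : c * x = s * (x + y)) (h1 : c * y = s * (x - y)) : y = rho * x := by
  have h2 : Real.sqrt 2 ^ 2 = 2 := Real.sq_sqrt zero_le_two
  have hquad : x ^ 2 - 2 * x * y - y ^ 2 = 0 := by
    refine (mul_eq_zero.1 ?_).resolve_left hs
    linear_combination y * h0 - x * h1
  have hfac : (y - rho * x) * (y + (Real.sqrt 2 + 1) * x) = 0 := by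
    simp only [rho]
    linear_combination -hquad - x ^ 2 * h2
  refine sub_eq_zero.1 ((mul_eq_zero.1 hfac).resolve_right ?_)
  positivity

lemma sum_range_ncard_mul_eq_sum {α : Type*} (s : Finset α) (w : α → ℕ) {n : ℕ}
    (hw : ∀ a ∈ s, w a ≤ n) (F : ℕ → ℝ) :
    ∑ k ∈ range (n + 1), ({a | a ∈ s ∧ w a = k}.ncard : ℝ) * F k = ∑ a ∈ s, F (w a) := by
  rw [← sum_fiberwise_of_maps_to fun a ha => mem_range.2 (Nat.lt_succ_of_le (hw a ha))]
  refine sum_congr rfl fun k _ => ?_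
  rw [sum_congr rfl fun a ha => by rw [(mem_filter.1 ha).2], sum_const, nsmul_eq_mul,
    ← Set.ncard_coe_finset, coe_filter]

lemma rho_pow_wt {n : ℕ} (v : Fin n → ZMod 2) : rho ^ wt v = ∏ i, rho ^ (v i).val := by
  have hval (a : ZMod 2) : a.val = if a = 1 then 1 else 0 := by decide +revert
  simp only [prod_pow_eq_pow_sum, hval, wt, card_filter]

section SelfDual

variable {n : ℕ}

open Classical in
noncomputable def codewords (C : Submodule (ZMod 2) (Fin n → ZMod 2)) :
    Finset (Fin n → ZMod 2) :=
  {v | v ∈ C}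

@[simp] lemma mem_codewords {C : Submodule (ZMod 2) (Fin n → ZMod 2)} {v : Fin n → ZMod 2} :
    v ∈ codewords C ↔ v ∈ C := by
  simp [codewords]

variable {C : Submodule (ZMod 2) (Fin n → ZMod 2)}

open Classical in
lemma IsSelfDual.sum_sgn_dot (hC : IsSelfDual C) (v : Fin n → ZMod 2) :
    ∑ u ∈ codewords C, sgn (∑ i, u i * v i) = if v ∈ C then (#(codewords C) : ℝ) else 0 := by
  split_ifs with hv
  · rw [sum_congr rfl fun u hu => by rw [(hC u).1 (mem_codewords.1 hu) v hv, sgn_zero]]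
    simp
  · obtain ⟨c, hc, hvc⟩ : ∃ c ∈ C, ∑ i, v i * c i ≠ 0 := by
      by_contra! h
      exact hv ((hC v).2 h)
    replace hvc : ∑ i, v i * c i = 1 := (zmod_two_cases _).resolve_left hvc
    -- translation by `c` permutes `C` and flips every sign
    have hflip : ∑ u ∈ codewords C, sgn (∑ i, u i * v i) =
        ∑ u ∈ codewords C, -sgn (∑ i, u i * v i) := by
      refine sum_equiv (Equiv.addRight c) (fun u => by simp [C.add_mem_iff_left hc]) fun u _ => ?_
      simp only [Equiv.coe_addRight, Pi.add_apply, add_mul, sum_add_distrib, sgn_add]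
      simp [mul_comm, hvc]
    rw [sum_neg_distrib] at hflip
    linarith

open Classical in
lemma IsSelfDual.card_mul_sum_eq_sum_sum_mul_sgn (hC : IsSelfDual C)
    (f : (Fin n → ZMod 2) → ℝ) :
    #(codewords C) * ∑ v ∈ codewords C, f v =
      ∑ u ∈ codewords C, ∑ v, f v * sgn (∑ i, u i * v i) := by
  rw [sum_comm]
  simp_rw [← mul_sum, hC.sum_sgn_dot, mul_ite, mul_zero, ← sum_filter, mul_sum, mul_comm]
  simp [codewords]

noncomputable def rhoPowOff (t : Fin n) (v : Fin n → ZMod 2) : ℝ :=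
  ∏ i ∈ univ.erase t, rho ^ (v i).val

lemma rho_pow_wt_eq_mul_rhoPowOff (t : Fin n) (v : Fin n → ZMod 2) :
    rho ^ wt v = rho ^ (v t).val * rhoPowOff t v := by
  rw [rho_pow_wt, ← mul_prod_erase univ _ (mem_univ t), rhoPowOff]

lemma sum_ite_rhoPowOff_mul_sgn (t : Fin n) (δ : ZMod 2) (u : Fin n → ZMod 2) :
    ∑ v, (if v t = δ then rhoPowOff t v else 0) * sgn (∑ i, u i * v i) =
      Real.sqrt 2 ^ (n - 1) * (sgn (u t * δ) * rhoPowOff t u) := by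
  set h : Fin n → ZMod 2 → ℝ := fun i a => if i = t then (if a = δ then 1 else 0) else rho ^ a.val
  have hprod (v : Fin n → ZMod 2) : ∏ i, h i (v i) = if v t = δ then rhoPowOff t v else 0 := by
    rw [← mul_prod_erase univ _ (mem_univ t), rhoPowOff,
      prod_congr rfl fun i hi => if_neg (ne_of_mem_erase hi)]
    simp [h]
  have hfactor : ∀ i ∈ univ.erase t, h i 0 + h i 1 * sgn (u i) = Real.sqrt 2 * rho ^ (u i).val :=
    fun i hi => by simp [h, ne_of_mem_erase hi, ZMod.val_one, one_add_rho_mul_sgn]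
  have ht : h t 0 + h t 1 * sgn (u t) = sgn (u t * δ) := by
    obtain rfl | rfl := zmod_two_cases δ <;> simp [h]
  simp_rw [← hprod, sum_prod_mul_sgn_dot, ← mul_prod_erase univ _ (mem_univ t), ht,
    prod_congr rfl hfactor, prod_mul_distrib, prod_const, card_erase_of_mem (mem_univ t),
    card_univ, Fintype.card_fin, rhoPowOff]
  ring

/-- `puncturedEnum C t δ = ∑ k, A_{k,δ} ρ ^ (k - δ)`. -/
noncomputable def puncturedEnum (C : Submodule (ZMod 2) (Fin n → ZMod 2)) (t : Fin n)
    (δ : ZMod 2) : ℝ :=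
  ∑ v ∈ codewords C with v t = δ, rhoPowOff t v

lemma sum_codewords_mul_rhoPowOff (t : Fin n) (g : ZMod 2 → ℝ) :
    ∑ v ∈ codewords C, g (v t) * rhoPowOff t v =
      g 0 * puncturedEnum C t 0 + g 1 * puncturedEnum C t 1 := by
  rw [← sum_fiberwise _ (· t), show (univ : Finset (ZMod 2)) = {0, 1} from rfl,
    sum_pair zero_ne_one, puncturedEnum, puncturedEnum, mul_sum, mul_sum]
  congr 1 <;> exact sum_congr rfl fun v hv => by rw [(mem_filter.1 hv).2]

lemma IsSelfDual.card_mul_puncturedEnum (hC : IsSelfDual C) (t : Fin n) (δ : ZMod 2) :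
    #(codewords C) * puncturedEnum C t δ =
      Real.sqrt 2 ^ (n - 1) * (puncturedEnum C t 0 + sgn δ * puncturedEnum C t 1) := by
  rw [puncturedEnum, sum_filter, hC.card_mul_sum_eq_sum_sum_mul_sgn]
  simp_rw [sum_ite_rhoPowOff_mul_sgn, ← mul_sum,
    sum_codewords_mul_rhoPowOff (g := fun a => sgn (a * δ))]
  simp

lemma rhoPowOff_nonneg (t : Fin n) (v : Fin n → ZMod 2) : 0 ≤ rhoPowOff t v :=
  prod_nonneg fun _ _ => pow_nonneg rho_pos.le _

lemma rho_zpow_wt_sub_one {t : Fin n} {v : Fin n → ZMod 2} (hv : v t = 1) :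
    rho ^ ((wt v : ℤ) - 1) = rhoPowOff t v := by
  rw [zpow_sub₀ rho_pos.ne', zpow_natCast, zpow_one, rho_pow_wt_eq_mul_rhoPowOff t, hv,
    ZMod.val_one, pow_one, mul_div_cancel_left₀ _ rho_pos.ne']

lemma one_le_puncturedEnum_zero (t : Fin n) : 1 ≤ puncturedEnum C t 0 := by
  have hzero : (0 : Fin n → ZMod 2) ∈ {v ∈ codewords C | v t = 0} := by simp [C.zero_mem]
  calc (1 : ℝ) = rhoPowOff t 0 := by simp [rhoPowOff]
    _ ≤ puncturedEnum C t 0 := single_le_sum (fun v _ => rhoPowOff_nonneg t v) hzero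

lemma IsSelfDual.puncturedEnum_one (hC : IsSelfDual C) (t : Fin n) :
    puncturedEnum C t 1 = rho * puncturedEnum C t 0 :=
  eq_rho_mul_of_mul_eq (pow_ne_zero _ (Real.sqrt_ne_zero'.2 two_pos))
    (one_pos.trans_le (one_le_puncturedEnum_zero t)) (sum_nonneg fun v _ => rhoPowOff_nonneg t v)
    (by simpa using hC.card_mul_puncturedEnum t 0)
    (by simpa [sub_eq_add_neg] using hC.card_mul_puncturedEnum t 1)

lemma sum_codewords_rho_pow_wt (t : Fin n) :
    ∑ v ∈ codewords C, rho ^ wt v = puncturedEnum C t 0 + rho * puncturedEnum C t 1 := by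
  simp_rw [rho_pow_wt_eq_mul_rhoPowOff t, sum_codewords_mul_rhoPowOff (g := fun a => rho ^ a.val)]
  simp [ZMod.val_one]

end SelfDual

/-- For a binary self-dual code C of length n, a fixed coordinate position t,
A_{k,1} the number of weight-k codewords with 1 in position t, and A_k the number
of weight-k codewords: Σ_{k=0}^{n} A_{k,1} ρ^{k−1} = ((1+ρ)/4)·Σ_{k=0}^{n} A_k ρ^k;
in particular the left-hand side does not depend on t. -/
theorem stmt_17 (n : ℕ) (C : Submodule (ZMod 2) (Fin n → ZMod 2))
    (hC : IsSelfDual C) (t : Fin n) :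
    ∑ k ∈ Finset.range (n + 1),
        ({v : Fin n → ZMod 2 | v ∈ C ∧ wt v = k ∧ v t = 1}.ncard : ℝ) * rho ^ ((k : ℤ) - 1) =
      ((1 + rho) / 4) *
        ∑ k ∈ Finset.range (n + 1),
          ({v : Fin n → ZMod 2 | v ∈ C ∧ wt v = k}.ncard : ℝ) * rho ^ k := by
  have hwt (v : Fin n → ZMod 2) : wt v ≤ n := (card_filter_le _ _).trans_eq (by simp)
  have hA₁ (k : ℕ) : {v | v ∈ C ∧ wt v = k ∧ v t = 1} =
      {v | v ∈ {v ∈ codewords C | v t = 1} ∧ wt v = k} := by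
    ext v
    simp only [Set.mem_ofPred_eq, mem_filter, mem_codewords]
    tauto
  have hA (k : ℕ) : {v | v ∈ C ∧ wt v = k} = {v | v ∈ codewords C ∧ wt v = k} := by
    simp only [mem_codewords]
  simp_rw [hA₁, hA, sum_range_ncard_mul_eq_sum _ _ fun v _ => hwt v]
  rw [sum_congr rfl fun v hv => rho_zpow_wt_sub_one (mem_filter.1 hv).2, ← puncturedEnum,
    sum_codewords_rho_pow_wt t, hC.puncturedEnum_one]
  linear_combination (-puncturedEnum C t 0 / 4) * one_add_rho_mul_one_add_rho_sq
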